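/- arXiv:1612.06347 — 3 statements merged into one kernel-verified Lean document; each statement's English description precedes it below -/
import Mathlib

section
/- Uniqueness of equilibrium by induction on values: Suppose the value set V = {v_1 < v_2 < ... < v_n} is finite, and the functions T, S : V → ℝ satisfy the system S(p) = 1 − Q(1 − F(p) + T(p)) and T(p) = Σ_{v ∈ V, v ≤ p} Σ_u f(v,u) · 1[u(v − p_r) ≥ E_{p'∼S}[u(max(v − p', 0))]], where for each v ∈ V the indicator for types with value v depends on S only through its restriction to values strictly below v (together with the total mass of spot prices below v). Then the system has a unique solution (T, S), and it can be computed by iterating over values in increasing order. -/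
/-!
Write `J v = I v S` for the reserved demand at value `v ∈ V`. A solution `(T, S)` is then the same
thing as a fixed point of `J ↦ (v ↦ I v (spotCDF J))`, with `S = spotCDF J`. The spot CDF below `v`
only involves demand at values below `v`, so this map is causal: its value at `v` depends on `J`
only at values `< v`. A causal map over a well-founded index set has exactly one fixed point,
obtained by well-founded recursion, i.e. by solving for the values of `V` in increasing order.
-/

open Finset Function

section CausalFixedPoint

variable {α β : Type*} [LT α]

def IsCausal (Φ : (α → β) → α → β) : Prop :=
  ∀ J J' a, (∀ b < a, J b = J' b) → Φ J a = Φ J' a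

variable [WellFoundedLT α]

theorem IsCausal.eq_of_isFixedPt {Φ : (α → β) → α → β} (hΦ : IsCausal Φ)
    {J J' : α → β} (hJ : IsFixedPt Φ J) (hJ' : IsFixedPt Φ J') : J = J' := by
  funext a
  induction a using WellFoundedLT.induction with
  | _ a ih => rw [← hJ, ← hJ', hΦ J J' a ih]

theorem IsCausal.existsUnique_isFixedPt [Nonempty β] {Φ : (α → β) → α → β} (hΦ : IsCausal Φ) :
    ∃! J, IsFixedPt Φ J := by
  classical
  let J : α → β := wellFounded_lt.fix fun a rec =>
    Φ (fun b => if h : b < a then rec b h else Classical.arbitrary β) a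
  have hJ : IsFixedPt Φ J := funext fun a => by
    rw [show J a = _ from wellFounded_lt.fix_eq _ a]
    exact hΦ _ _ a fun b hb => by rw [dif_pos hb]
  exact ⟨J, hJ, fun J' hJ' => hΦ.eq_of_isFixedPt hJ' hJ⟩

end CausalFixedPoint

section Equilibrium

variable (V : Finset ℝ) (F Q : ℝ → ℝ)

noncomputable def reservedMass (J : V → ℝ) (p : ℝ) : ℝ :=
  ∑ w ∈ V.attach with w.1 ≤ p, J w

noncomputable def spotCDF (J : V → ℝ) (p : ℝ) : ℝ :=
  1 - Q (1 - F p + reservedMass V J p)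

theorem sum_filter_le_eq_reservedMass (g : ℝ → ℝ) (p : ℝ) :
    ∑ v ∈ V with v ≤ p, g v = reservedMass V (fun w => g w) p := by
  rw [reservedMass, sum_filter, sum_filter, sum_attach V fun w => if w ≤ p then g w else 0]

variable {V}

theorem reservedMass_congr {J J' : V → ℝ} {p : ℝ} (h : ∀ w : V, w.1 ≤ p → J w = J' w) :
    reservedMass V J p = reservedMass V J' p :=
  sum_congr rfl fun w hw => h w (mem_filter.1 hw).2

end Equilibrium

/-- Uniqueness of equilibrium by induction on values.  `V` is the finite set of values
in the support of the type distribution, `F` the marginal value CDF, `Q` the supply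
CDF, and for each value `v ∈ V` the quantity `I v S` is the mass of reserved instances
demanded by agents of value `v` when the spot-price CDF is `S`, i.e.
`I v S = Σ_u f(v,u) · 1[u(v − p_r) ≥ E_{p'∼S}[u(max(v − p', 0))]]`.  The key structural
hypothesis is that `I v S` depends on `S` only through its restriction to prices
strictly below `v` (since `max (v - p') 0 = 0` for `p' ≥ v`).  Then the equilibrium
system `T p = Σ_{v ∈ V, v ≤ p} I v S` and `S p = 1 − Q (1 − F p + T p)` has a unique
solution `(T, S)`. -/
theorem equilibrium_unique (V : Finset ℝ) (F Q : ℝ → ℝ)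
    (I : ℝ → (ℝ → ℝ) → ℝ)
    (hI : ∀ v ∈ V, ∀ S S' : ℝ → ℝ, (∀ p : ℝ, p < v → S p = S' p) → I v S = I v S') :
    ∃! TS : (ℝ → ℝ) × (ℝ → ℝ),
      (∀ p : ℝ, TS.1 p = ∑ v ∈ V.filter (fun v => v ≤ p), I v TS.2) ∧
      (∀ p : ℝ, TS.2 p = 1 - Q (1 - F p + TS.1 p)) := by
  let Φ : (V → ℝ) → V → ℝ := fun J v => I v (spotCDF V F Q J)
  have hΦ : IsCausal Φ := fun J J' v h =>
    hI v v.2 _ _ fun p hp => by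
      rw [spotCDF, spotCDF, reservedMass_congr fun w hw => h w (hw.trans_lt hp)]
  obtain ⟨J, hJ, hJ_unique⟩ := hΦ.existsUnique_isFixedPt
  refine ⟨(fun p => ∑ v ∈ V with v ≤ p, I v (spotCDF V F Q J), spotCDF V F Q J),
    ⟨fun p => rfl, fun p => ?_⟩, ?_⟩
  · dsimp only
    rw [sum_filter_le_eq_reservedMass]
    exact congrArg (fun K => 1 - Q (1 - F p + reservedMass V K p)) hJ.symm
  rintro ⟨T, S⟩ ⟨hT, hS⟩
  dsimp only at hT hS
  have hS_spot : S = spotCDF V F Q (fun v => I v S) :=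
    funext fun p => by rw [hS, hT, sum_filter_le_eq_reservedMass]; rfl
  have hJ_eq : (fun v : V => I v S) = J :=
    hJ_unique _ (congrArg (fun S' (v : V) => I v S') hS_spot.symm)
  have hS_eq : S = spotCDF V F Q J := hJ_eq ▸ hS_spot
  exact Prod.ext (funext fun p => by dsimp only; rw [hT, hS_eq]) hS_eq
end

section
/- Spot prices only increase with reservations: For any equilibrium of the dual spot+reservation mechanism and any realized supply q, the dual-market spot price satisfies p_s^{s+r}(q) ≥ p_s^{s}(q), where p_s^{s}(q) is the clearing price of the spot-only mechanism with the same value distribution and supply. -/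
theorem setOf_residual_clearing_subset_setOf_clearing (F R : ℝ → ℝ) (T q : ℝ)
    (hR0 : ∀ p, 0 ≤ R p) :
    {p : ℝ | (1 - F p) - (T - R p) ≤ q - T} ⊆ {p : ℝ | 1 - F p ≤ q} :=
  fun p (hp : (1 - F p) - (T - R p) ≤ q - T) => show 1 - F p ≤ q by linarith [hR0 p]

theorem dual_spot_price_ge_spot_only_general (F R : ℝ → ℝ) (T q : ℝ)
    (hR0 : ∀ p, 0 ≤ R p)
    (hbdd : BddBelow {p : ℝ | 1 - F p ≤ q})
    (hne : {p : ℝ | (1 - F p) - (T - R p) ≤ q - T}.Nonempty) :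
    sInf {p : ℝ | 1 - F p ≤ q} ≤ sInf {p : ℝ | (1 - F p) - (T - R p) ≤ q - T} :=
  csInf_le_csInf hbdd hne (setOf_residual_clearing_subset_setOf_clearing F R T q hR0)

/-- Spot prices only increase with reservations.  `F` is the value CDF, so `1 − F p` is
the mass of bidders with value above `p`; `R p` is the mass of reserving bidders with
value at most `p` (so `0 ≤ R p ≤ T`, where `T` is the total reserved mass), and `q` is
the realized supply.  The spot-only clearing price is
`p_s^s(q) = inf {p | 1 − F p ≤ q}`, while the dual-market residual clearing price is
`p_s^{s+r}(q) = inf {p | (1 − F p) − (T − R p) ≤ q − T}` (non-reserving demand above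
`p` at most the residual supply).  Then `p_s^{s+r}(q) ≥ p_s^s(q)`. -/
theorem dual_spot_price_ge_spot_only (F R : ℝ → ℝ) (T q : ℝ)
    (hR0 : ∀ p, 0 ≤ R p) (hRT : ∀ p, R p ≤ T)
    (hbdd : BddBelow {p : ℝ | 1 - F p ≤ q})
    (hne : {p : ℝ | (1 - F p) - (T - R p) ≤ q - T}.Nonempty) :
    sInf {p : ℝ | 1 - F p ≤ q} ≤ sInf {p : ℝ | (1 - F p) - (T - R p) ≤ q - T} :=
  dual_spot_price_ge_spot_only_general F R T q hR0 hbdd hne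
end

section
/- Welfare dominance of the dual market over the spot-only market (benchmark step 1): Let B be the benchmark mechanism identical to the dual mechanism except every reserving agent pays the realized dual-market spot price p_s^{s+r}(q) instead of p_r (and reserving agents with value below the spot price contribute only their payment to welfare). If p_r ≥ E_{q∼Q}[p_s^{s+r}(q)] and every reserving agent weakly prefers reserving to the spot market, then E_{q∼Q}[WEL_q(dual)] ≥ E_{q∼Q}[WEL_q(B)]. -/
/-! Welfare is linear in the agents, so it suffices to compare each reserving agent's expected
contribution: her reservation utility dominates her expected spot utility (reservation preference)
and the reservation price dominates the expected spot price. -/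

open Finset

section WeightedSum

variable {Ω ι : Type*} {s : Finset Ω} {w : Ω → ℝ}

theorem weighted_sum_add_sum (N : Ω → ℝ) (t : Finset ι) (g : ι → Ω → ℝ) :
    ∑ q ∈ s, w q * (N q + ∑ i ∈ t, g i q)
      = ∑ q ∈ s, w q * N q + ∑ i ∈ t, ∑ q ∈ s, w q * g i q := by
  simp only [mul_add, mul_sum, sum_add_distrib]
  rw [sum_comm]

theorem weighted_sum_const (hw : ∑ q ∈ s, w q = 1) (c : ℝ) : ∑ q ∈ s, w q * c = c := by
  rw [← sum_mul, hw, one_mul]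

theorem weighted_sum_const_mul_add (c : ℝ) (a b : Ω → ℝ) :
    ∑ q ∈ s, w q * (c * (a q + b q)) = c * (∑ q ∈ s, w q * a q + ∑ q ∈ s, w q * b q) := by
  simp only [mul_left_comm (w _) c, ← mul_sum, mul_add, sum_add_distrib]

end WeightedSum

theorem dual_welfare_ge_benchmark_general
    {ι : Type*} (Reserve : Finset ι) (value : ι → ℝ) (u : ι → ℝ → ℝ) (f : ι → ℝ)
    (Qs : Finset ℝ) (wq : ℝ → ℝ) (ps : ℝ → ℝ) (N : ℝ → ℝ) (pr : ℝ)
    (hsum : (∑ q ∈ Qs, wq q) = 1)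
    (hf : ∀ i, 0 ≤ f i)
    (hpr : (∑ q ∈ Qs, wq q * ps q) ≤ pr)
    (hprefer : ∀ i ∈ Reserve,
        (∑ q ∈ Qs, wq q * u i (max (value i - ps q) 0)) ≤ u i (value i - pr)) :
    (∑ q ∈ Qs, wq q * (N q + ∑ i ∈ Reserve, f i * (u i (max (value i - ps q) 0) + ps q)))
      ≤ ∑ q ∈ Qs, wq q * (N q + ∑ i ∈ Reserve, f i * (u i (value i - pr) + pr)) := by
  rw [weighted_sum_add_sum, weighted_sum_add_sum]
  refine add_le_add_right (sum_le_sum fun i hi => ?_) _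
  rw [weighted_sum_const hsum, weighted_sum_const_mul_add]
  exact mul_le_mul_of_nonneg_left (add_le_add (hprefer i hi) hpr) (hf i)

/-- Welfare dominance of the dual market over the spot-only market, benchmark step 1.
Supply is finitely supported (support `Qs`, nonnegative weights `wq` summing to one),
with realized dual-market spot price `ps q`.  `Reserve` is the (finite) set of
reserving agent types, with values `value i`, utility curves `u i` (with `u i 0 = 0`)
and nonnegative masses `f i`; `N q` is the (common) welfare contribution of the
non-reserving agents at supply `q`.  In the dual mechanism a reserving agent
contributes `u i (value i − p_r) + p_r`; in the benchmark `B` she pays the spot price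
instead, contributing `u i (max (value i − ps q) 0) + ps q`.  If the reservation price
weakly exceeds the expected spot price, `p_r ≥ E_q[ps q]`, and every reserving agent
weakly prefers reserving to the spot lottery, then the expected welfare of the dual
mechanism is at least that of the benchmark. -/
theorem dual_welfare_ge_benchmark
    {ι : Type*} (Reserve : Finset ι) (value : ι → ℝ) (u : ι → ℝ → ℝ) (f : ι → ℝ)
    (Qs : Finset ℝ) (wq : ℝ → ℝ) (ps : ℝ → ℝ) (N : ℝ → ℝ) (pr : ℝ)
    (hwq : ∀ q ∈ Qs, 0 ≤ wq q) (hsum : (∑ q ∈ Qs, wq q) = 1)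
    (hf : ∀ i, 0 ≤ f i)
    (hu0 : ∀ i, u i 0 = 0)
    (hpr : (∑ q ∈ Qs, wq q * ps q) ≤ pr)
    (hprefer : ∀ i ∈ Reserve,
        (∑ q ∈ Qs, wq q * u i (max (value i - ps q) 0)) ≤ u i (value i - pr)) :
    (∑ q ∈ Qs, wq q * (N q + ∑ i ∈ Reserve, f i * (u i (max (value i - ps q) 0) + ps q)))
      ≤ ∑ q ∈ Qs, wq q * (N q + ∑ i ∈ Reserve, f i * (u i (value i - pr) + pr)) :=
  dual_welfare_ge_benchmark_general Reserve value u f Qs wq ps N pr hsum hf hpr hprefer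
end
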